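/- Let σ be a primitive invertible substitution on 𝒜 = {a,b} with det M_σ = 1. If σ is selfdual, then M_σ⁻¹ = Q⁻¹ · M_σ · Q for Q = [[−1,0],[0,1]] or for Q = [[0,−1],[1,0]]; and M_σᵀ = P · M_σ · Pᵀ for P = [[0,1],[1,0]] or for P = the identity matrix. -/

import Mathlib

open scoped Matrix

/-- The two-letter alphabet `𝒜 = {a, b}`; the letter `a` is `0` and the letter `b` is `1`. -/
abbrev A2 := Fin 2

/-- A substitution on the two-letter alphabet, given by the images of the two letters.
(The nonerasing condition is stated separately as `TwoSubst.NonErasing`.) -/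
abbrev Subst := A2 → List A2

namespace TwoSubst

/-- A substitution is non-erasing if the images of the letters are nonempty words. -/
def NonErasing (σ : Subst) : Prop := ∀ i : A2, σ i ≠ []

/-- The extension of a substitution to finite words (the morphism of the free monoid). -/
def apply (σ : Subst) (w : List A2) : List A2 := w.flatMap σ

/-- The `n`-th power `σ^n` of a substitution (as a substitution). -/
def substPow (σ : Subst) (n : ℕ) : Subst := fun i => (apply σ)^[n] [i]

/-- Composition of substitutions: `(σ ∘ τ)(i) = σ(τ(i))`. -/
def comp (σ τ : Subst) : Subst := fun i => apply σ (τ i)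

/-- The substitution matrix `M_σ`: entry `(i, j)` is the number of occurrences of the
letter `i` in `σ(j)`. -/
def M (σ : Subst) : Matrix (Fin 2) (Fin 2) ℤ := fun i j => ((σ j).count i : ℤ)

/-- A substitution is primitive if some power of its substitution matrix has all
entries positive. -/
def Primitive (σ : Subst) : Prop := ∃ n : ℕ, 0 < n ∧ ∀ i j, 0 < (M σ ^ n) i j

/-- A finite word, regarded as an element of the free group `F₂`. -/
def toFG (w : List A2) : FreeGroup A2 := (w.map FreeGroup.of).prod

/-- The endomorphism of the free group `F₂` induced by a substitution. -/
def endo (σ : Subst) : Monoid.End (FreeGroup A2) := FreeGroup.lift fun i => toFG (σ i)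

/-- A substitution is invertible if its extension to the free group `F₂` is an
automorphism of `F₂`. -/
def IsInvertible (σ : Subst) : Prop := Function.Bijective (endo σ)

/-- Two substitutions are conjugate, `σ ~ ρ`, if `σ = γ_w ∘ ρ` as endomorphisms of `F₂`
for some `w ∈ F₂`, where `γ_w x = w * x * w⁻¹`. -/
def Conj (σ ρ : Subst) : Prop := ∃ w : FreeGroup A2, ∀ x, endo σ x = w * endo ρ x * w⁻¹

/-- `w` is a (finite) factor of the bi-infinite word `u : ℤ → A2`. -/
def IsFactor (w : List A2) (u : ℤ → A2) : Prop :=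
  ∃ k : ℤ, w = (List.range w.length).map fun i => u (k + i)

/-- The hull `X_σ`: the set of bi-infinite words all of whose finite factors appear as
factors of `σ^n(a)` or `σ^n(b)` for some `n ∈ ℕ`. -/
def Hull (σ : Subst) : Set (ℤ → A2) :=
  { u | ∀ w : List A2, IsFactor w u → ∃ (n : ℕ) (x : A2), w <:+: substPow σ n x }

/-- The substitution `E : a ↦ b, b ↦ a`. -/
def Esub : Subst := ![[1], [0]]

/-- The substitution `L : a ↦ a, b ↦ ab`. -/
def Lsub : Subst := ![[0], [0, 1]]

/-- The composition `L^{a₁} ∘ E ∘ L^{a₂} ∘ E ∘ ⋯ ∘ E ∘ L^{a_m}` encoded by the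
nonempty list of exponents `a₁ :: [a₂, …, a_m]`. -/
def chain : ℕ → List ℕ → Subst
  | a, [] => substPow Lsub a
  | a, b :: rest => comp (substPow Lsub a) (comp Esub (chain b rest))

/-- The letter-exchange map `a ↦ b, b ↦ a` on letters. -/
def swapA : A2 → A2 := fun i => if i = 0 then 1 else 0

/-- The substitution matrix with real entries. -/
noncomputable def Mreal (σ : Subst) : Matrix (Fin 2) (Fin 2) ℝ := (M σ).map fun z => (z : ℝ)

/-- `lam` is the inflation factor (Perron–Frobenius eigenvalue) of `σ`: it is an
eigenvalue of `M_σ` admitting a positive eigenvector. -/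
def IsInflation (σ : Subst) (lam : ℝ) : Prop :=
  ∃ v : Fin 2 → ℝ, (∀ i, 0 < v i) ∧ (Mreal σ).mulVec v = lam • v

/-- `α` is the frequency of `σ`: `α ∈ (0,1)` and `(1-α, α)` is an eigenvector of `M_σ`
for an eigenvalue with positive eigenvector (necessarily the Perron-Frobenius
eigenvalue, i.e. the inflation factor, when `σ` is primitive). -/
def IsFreq (σ : Subst) (α : ℝ) : Prop :=
  0 < α ∧ α < 1 ∧ ∃ lam : ℝ, (Mreal σ).mulVec ![1 - α, α] = lam • ![1 - α, α]

/-- The automorphism `τ_a : a ↦ a⁻¹, b ↦ b` of the free group `F₂`. -/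
def tauA : Monoid.End (FreeGroup A2) :=
  FreeGroup.lift fun i : A2 => if i = 0 then (FreeGroup.of (0 : A2))⁻¹ else FreeGroup.of 1

/-- `ρ` is the reciprocal substitution `σ̄ = τ_a ∘ σ⁻¹ ∘ τ_a⁻¹` of `σ`, where
`φ` is the inverse automorphism `σ⁻¹` (note `τ_a⁻¹ = τ_a`). -/
def IsReciprocal (σ ρ : Subst) (φ : Monoid.End (FreeGroup A2)) : Prop :=
  (∀ x, φ (endo σ x) = x) ∧ (∀ x, endo σ (φ x) = x) ∧
    NonErasing ρ ∧ ∀ x, endo ρ x = tauA (φ (tauA x))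

/-- `σ` is a selfdual substitution (relative to its reciprocal `ρ = σ̄`):
`σ ~ σ̄` or `σ ~ E ∘ σ̄ ∘ E`. -/
def SelfDual (σ ρ : Subst) : Prop :=
  Conj σ ρ ∨ Conj σ (comp Esub (comp ρ Esub))

/-! ### Strands and dual maps -/

/-- Integer vectors in the plane. -/
abbrev V2 := Fin 2 → ℤ

/-- The abelianisation map `A : 𝒜* → ℤ²`, counting occurrences of each letter. -/
def Avec (w : List A2) : V2 := fun i => (w.count i : ℤ)

/-- The space `𝒢` (and its dual `𝒢*`): formal finite real linear combinations of the
basis elements `(W, i)` (resp. `(W, i*)`), `W ∈ ℤ²`, `i ∈ 𝒜`. -/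
abbrev Gspace := (V2 × A2) →₀ ℝ

/-- The image of the basis element `(W, i)` under `E₁(σ)`. -/
noncomputable def E1Basis (σ : Subst) (p : V2 × A2) : Gspace :=
  ∑ k ∈ Finset.range (σ p.2).length,
    Finsupp.single ((M σ).mulVec p.1 + Avec ((σ p.2).take k), (σ p.2).getD k p.2) (1 : ℝ)

/-- The one-dimensional extension `E₁(σ)`, as a linear map on `𝒢`. -/
noncomputable def E1 (σ : Subst) : Gspace →ₗ[ℝ] Gspace :=
  Finsupp.lift Gspace ℝ (V2 × A2) (E1Basis σ)

/-- The image of the basis element `(W, i*)` under the dual map `E₁*(σ)`: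
`E₁*(σ)(W, i*) = Σ_{j,k : σ(j)_k = i} (M_σ⁻¹·(W + A(σ(j)_{k+1}⋯σ(j)_{|σ(j)|})), j*)`. -/
noncomputable def E1starBasis (σ : Subst) (p : V2 × A2) : Gspace :=
  ∑ j : A2, ∑ k ∈ Finset.range (σ j).length,
    if (σ j).getD k j = p.2 then
      Finsupp.single ((M σ)⁻¹.mulVec (p.1 + Avec ((σ j).drop (k + 1))), j) (1 : ℝ)
    else 0

/-- The dual map `E₁*(σ)`, as a linear map on `𝒢*`. -/
noncomputable def E1star (σ : Subst) : Gspace →ₗ[ℝ] Gspace :=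
  Finsupp.lift Gspace ℝ (V2 × A2) (E1starBasis σ)

/-- The basis vector `e_a = (1,0)`. -/
def ea : V2 := ![1, 0]

/-- The basis vector `e_b = (0,1)`. -/
def eb : V2 := ![0, 1]

/-- `γ(0), …, γ(n)` is a finite dual strand: each step is `e_a` or `-e_b`. -/
def IsDualStrand (n : ℕ) (γ : ℕ → V2) : Prop :=
  ∀ k < n, γ (k + 1) - γ k = ea ∨ γ (k + 1) - γ k = -eb

/-- The element of `𝒢*` associated with a finite dual strand `γ(0), …, γ(n)`:
the sum of `(γ(k), b*)` over the `e_a`-steps and `(γ(k+1), a*)` over the `-e_b`-steps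
(the letter `a` is `0`, the letter `b` is `1`). -/
noncomputable def strandElem (n : ℕ) (γ : ℕ → V2) : Gspace :=
  ∑ k ∈ Finset.range n,
    if γ (k + 1) - γ k = ea then Finsupp.single (γ k, (1 : A2)) (1 : ℝ)
    else Finsupp.single (γ (k + 1), (0 : A2)) (1 : ℝ)

/-! ### Endomorphisms of the free group -/

/-- The exponent-sum homomorphism of the generator `i` on `F₂`. -/
def expSum (i : A2) : FreeGroup A2 →* Multiplicative ℤ :=
  FreeGroup.lift fun j : A2 => Multiplicative.ofAdd (if j = i then (1 : ℤ) else 0)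

/-- The abelianised matrix of an endomorphism of `F₂`: entry `(i,j)` is the exponent
sum of the generator `i` in the image of the generator `j`. -/
def abelMatrix (σ : Monoid.End (FreeGroup A2)) : Matrix (Fin 2) (Fin 2) ℤ :=
  fun i j => Multiplicative.toAdd (expSum i (σ (FreeGroup.of j)))

/-- `wprod ρ w k = w · ρ(w) · ρ²(w) ⋯ ρ^{k−1}(w)`. -/
def wprod (ρ : Monoid.End (FreeGroup A2)) (w : FreeGroup A2) : ℕ → FreeGroup A2
  | 0 => 1
  | k + 1 => wprod ρ w k * (ρ ^ k) w

end TwoSubst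

/-! Abelianisation turns `σ ~ ρ` into `M_σ = M_ρ`, composition into matrix product, and
`τ_a` into `𝔻 = diag(-1, 1)`, so selfduality gives `M = 𝔻 M⁻¹ 𝔻` or `M = 𝕁 𝔻 M⁻¹ 𝔻 𝕁`
with `𝕁` the exchange matrix. When `det M = 1`, `M⁻¹` is the adjugate, and for every
`2 × 2` matrix `𝔻 (adj M) 𝔻 = 𝕁 Mᵀ 𝕁`; both conditions follow by conjugating with the
involutions `𝔻` and `𝕁`, using `𝕋 = 𝔻 𝕁` and `𝕋⁻¹ = -𝕋` for the quarter turn `𝕋`. -/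

lemma eq_mul_mul_of_mul_self_eq_one {α : Type*} [Monoid α] {p a b : α} (hp : p * p = 1)
    (h : a = p * b * p) : b = p * a * p := by
  rw [h, ← mul_assoc, ← mul_assoc, hp, one_mul, mul_assoc, hp, mul_one]

namespace Matrix

variable {R : Type*} [CommRing R]

local notation "𝔻" => !![(-1 : R), 0; 0, 1]
local notation "𝕁" => !![(0 : R), 1; 1, 0]
local notation "𝕋" => !![(0 : R), -1; 1, 0]

lemma reflect_mul_self : 𝔻 * 𝔻 = 1 := by
  ext i j; fin_cases i <;> fin_cases j <;> simp

lemma exchange_mul_self : 𝕁 * 𝕁 = 1 := by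
  ext i j; fin_cases i <;> fin_cases j <;> simp

lemma exchange_transpose : (𝕁)ᵀ = 𝕁 := by
  ext i j; fin_cases i <;> fin_cases j <;> simp

lemma rot_eq_reflect_mul_exchange : 𝕋 = 𝔻 * 𝕁 := by
  ext i j; fin_cases i <;> fin_cases j <;> simp

lemma rot_inv_eq_exchange_mul_reflect : 𝕋⁻¹ = 𝕁 * 𝔻 := by
  refine inv_eq_left_inv ?_
  ext i j; fin_cases i <;> fin_cases j <;> simp

lemma rot_inv_eq_neg : 𝕋⁻¹ = -𝕋 := by
  rw [rot_inv_eq_exchange_mul_reflect]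
  ext i j; fin_cases i <;> fin_cases j <;> simp

lemma reflect_mul_adjugate_mul_reflect (A : Matrix (Fin 2) (Fin 2) R) :
    𝔻 * A.adjugate * 𝔻 = 𝕁 * Aᵀ * 𝕁 := by
  ext i j
  fin_cases i <;> fin_cases j <;>
    simp [adjugate_fin_two, mul_apply, Fin.sum_univ_two, vecMul, dotProduct]

lemma inv_eq_adjugate_of_det_eq_one {n : Type*} [Fintype n] [DecidableEq n]
    {A : Matrix n n R} (hA : A.det = 1) :
    A⁻¹ = A.adjugate := by
  rw [inv_def, hA, Ring.inverse_one, one_smul]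

lemma inv_eq_and_transpose_eq_of_eq_reflect_conj_inv {A : Matrix (Fin 2) (Fin 2) R}
    (hA : A.det = 1) (h : A = 𝔻 * A⁻¹ * 𝔻) :
    A⁻¹ = (𝔻)⁻¹ * A * 𝔻 ∧ Aᵀ = 𝕁 * A * (𝕁)ᵀ := by
  refine ⟨?_, ?_⟩
  · rw [inv_eq_left_inv reflect_mul_self]
    exact eq_mul_mul_of_mul_self_eq_one reflect_mul_self h
  · rw [exchange_transpose]
    refine eq_mul_mul_of_mul_self_eq_one exchange_mul_self ?_
    rwa [← reflect_mul_adjugate_mul_reflect, ← inv_eq_adjugate_of_det_eq_one hA]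

lemma inv_eq_and_transpose_eq_of_eq_exchange_reflect_conj_inv {A : Matrix (Fin 2) (Fin 2) R}
    (hA : A.det = 1) (h : A = 𝕁 * (𝔻 * A⁻¹ * 𝔻) * 𝕁) :
    A⁻¹ = 𝕋⁻¹ * A * 𝕋 ∧ Aᵀ = 1 * A * 1ᵀ := by
  refine ⟨?_, ?_⟩
  · calc A⁻¹ = 𝔻 * (𝕁 * A * 𝕁) * 𝔻 :=
          eq_mul_mul_of_mul_self_eq_one reflect_mul_self
            (eq_mul_mul_of_mul_self_eq_one exchange_mul_self h).symm
      _ = 𝕋 * A * 𝕋⁻¹ := by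
          rw [rot_inv_eq_exchange_mul_reflect, rot_eq_reflect_mul_exchange]; simp only [mul_assoc]
      _ = 𝕋⁻¹ * A * 𝕋 := by rw [rot_inv_eq_neg]; simp only [neg_mul, mul_neg]
  · rw [inv_eq_adjugate_of_det_eq_one hA, reflect_mul_adjugate_mul_reflect] at h
    rw [transpose_one, one_mul, mul_one]
    conv_rhs => rw [h]
    simp only [← mul_assoc, exchange_mul_self, one_mul]
    rw [mul_assoc, exchange_mul_self, mul_one]

end Matrix

namespace TwoSubst

open Multiplicative

lemma toAdd_expSum_of (i j : A2) :
    toAdd (expSum i (FreeGroup.of j)) = if j = i then 1 else 0 := by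
  simp [expSum]

lemma toAdd_expSum_map (f : Monoid.End (FreeGroup A2)) (i : A2) (x : FreeGroup A2) :
    toAdd (expSum i (f x)) = ∑ k : A2, abelMatrix f i k * toAdd (expSum k x) := by
  induction x using FreeGroup.induction_on with
  | C1 => simp
  | of j => simp [toAdd_expSum_of, abelMatrix]
  | inv_of x ih => simp [ih]
  | mul x y hx hy => simp [hx, hy, mul_add, Finset.sum_add_distrib]

lemma abelMatrix_one : abelMatrix 1 = 1 := by
  ext i j
  simp [abelMatrix, toAdd_expSum_of, Matrix.one_apply, eq_comm]

lemma abelMatrix_mul (f g : Monoid.End (FreeGroup A2)) :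
    abelMatrix (f * g) = abelMatrix f * abelMatrix g := by
  ext i j
  exact toAdd_expSum_map f i (g (FreeGroup.of j))

lemma abelMatrix_eq_of_conj {f g : Monoid.End (FreeGroup A2)} (w : FreeGroup A2)
    (h : ∀ x, f x = w * g x * w⁻¹) : abelMatrix f = abelMatrix g := by
  ext i j
  simp only [abelMatrix, h, map_mul, map_inv, toAdd_mul, toAdd_inv]
  ring

lemma toAdd_expSum_toFG (i : A2) (w : List A2) :
    toAdd (expSum i (toFG w)) = w.count i := by
  induction w with
  | nil => simp [toFG]
  | cons j t ih =>
    simp only [toFG, List.map_cons, List.prod_cons] at ih ⊢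
    rw [map_mul, toAdd_mul, ih, toAdd_expSum_of, List.count_cons]
    split_ifs <;> simp_all [add_comm]

lemma tauA_of (j : A2) :
    tauA (FreeGroup.of j) = if j = 0 then (FreeGroup.of 0)⁻¹ else FreeGroup.of 1 :=
  FreeGroup.lift_apply_of

lemma abelMatrix_tauA : abelMatrix tauA = !![-1, 0; 0, 1] := by
  ext i j
  fin_cases i <;> fin_cases j <;> simp [abelMatrix, tauA_of, toAdd_expSum_of]

lemma endo_of (σ : Subst) (j : A2) : endo σ (FreeGroup.of j) = toFG (σ j) :=
  FreeGroup.lift_apply_of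

lemma abelMatrix_endo (σ : Subst) : abelMatrix (endo σ) = M σ := by
  ext i j
  simp [abelMatrix, endo_of, toAdd_expSum_toFG, M]

lemma endo_toFG (σ : Subst) (w : List A2) : endo σ (toFG w) = toFG (apply σ w) := by
  induction w with
  | nil => simp [toFG, apply]
  | cons j t ih =>
    simp only [toFG, apply, List.map_cons, List.prod_cons, List.flatMap_cons, List.map_append,
      List.prod_append, map_mul] at ih ⊢
    rw [ih]
    exact congrArg (· * _) (endo_of σ j)

lemma endo_comp (σ τ : Subst) : endo (comp σ τ) = endo σ * endo τ := by
  refine FreeGroup.ext_hom _ _ fun j => ?_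
  change endo (comp σ τ) (FreeGroup.of j) = endo σ (endo τ (FreeGroup.of j))
  rw [endo_of, endo_of, endo_toFG]
  rfl

lemma M_comp (σ τ : Subst) : M (comp σ τ) = M σ * M τ := by
  rw [← abelMatrix_endo, endo_comp, abelMatrix_mul, abelMatrix_endo, abelMatrix_endo]

lemma M_eq_of_conj {σ τ : Subst} (h : Conj σ τ) : M σ = M τ := by
  obtain ⟨w, hw⟩ := h
  rw [← abelMatrix_endo, ← abelMatrix_endo, abelMatrix_eq_of_conj w hw]

lemma M_Esub : M Esub = !![0, 1; 1, 0] := by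
  ext i j
  fin_cases i <;> fin_cases j <;> rfl

lemma M_of_isReciprocal {σ ρ : Subst} {φ : Monoid.End (FreeGroup A2)}
    (h : IsReciprocal σ ρ φ) : M ρ = !![-1, 0; 0, 1] * (M σ)⁻¹ * !![-1, 0; 0, 1] := by
  obtain ⟨-, hσφ, -, hρ⟩ := h
  have hφ : abelMatrix φ = (M σ)⁻¹ := by
    refine (Matrix.inv_eq_right_inv ?_).symm
    rw [← abelMatrix_endo, ← abelMatrix_mul, (MonoidHom.ext hσφ : endo σ * φ = 1), abelMatrix_one]
  rw [← abelMatrix_endo, (MonoidHom.ext hρ : endo ρ = tauA * φ * tauA), abelMatrix_mul,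
    abelMatrix_mul, abelMatrix_tauA, hφ, mul_assoc]

end TwoSubst

open TwoSubst in
theorem selfdual_matrix_conditions_general (σ ρ : Subst) (hdet : (M σ).det = 1)
    (φ : Monoid.End (FreeGroup A2)) (hrecip : IsReciprocal σ ρ φ)
    (hsd : SelfDual σ ρ) :
    ((M σ)⁻¹ = (!![(-1 : ℤ), 0; 0, 1])⁻¹ * M σ * !![(-1 : ℤ), 0; 0, 1] ∨
      (M σ)⁻¹ = (!![(0 : ℤ), -1; 1, 0])⁻¹ * M σ * !![(0 : ℤ), -1; 1, 0]) ∧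
    ((M σ)ᵀ = !![(0 : ℤ), 1; 1, 0] * M σ * (!![(0 : ℤ), 1; 1, 0])ᵀ ∨
      (M σ)ᵀ = (1 : Matrix (Fin 2) (Fin 2) ℤ) * M σ * (1 : Matrix (Fin 2) (Fin 2) ℤ)ᵀ) := by
  have hρ := M_of_isReciprocal hrecip
  rcases hsd with hconj | hconj
  · obtain ⟨hinv, htr⟩ := Matrix.inv_eq_and_transpose_eq_of_eq_reflect_conj_inv hdet
      ((M_eq_of_conj hconj).trans hρ)
    exact ⟨Or.inl hinv, Or.inl htr⟩
  · obtain ⟨hinv, htr⟩ := Matrix.inv_eq_and_transpose_eq_of_eq_exchange_reflect_conj_inv hdet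
      ((M_eq_of_conj hconj).trans (by rw [M_comp, M_comp, M_Esub, hρ]; simp only [mul_assoc]))
    exact ⟨Or.inr hinv, Or.inr htr⟩

open TwoSubst in
/-- If `σ` is a primitive invertible selfdual substitution on `{a,b}`
with `det M_σ = 1` (with reciprocal `ρ = σ̄`), then `M_σ⁻¹ = Q⁻¹·M_σ·Q` for
`Q = [[−1,0],[0,1]]` or `Q = [[0,−1],[1,0]]`, and `M_σᵀ = P·M_σ·Pᵀ` for
`P = [[0,1],[1,0]]` or `P = 1`. -/
theorem selfdual_matrix_conditions (σ ρ : Subst) (hne : NonErasing σ)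
    (hprim : Primitive σ) (hdet : (M σ).det = 1)
    (φ : Monoid.End (FreeGroup A2)) (hrecip : IsReciprocal σ ρ φ)
    (hsd : SelfDual σ ρ) :
    ((M σ)⁻¹ = (!![(-1 : ℤ), 0; 0, 1])⁻¹ * M σ * !![(-1 : ℤ), 0; 0, 1] ∨
      (M σ)⁻¹ = (!![(0 : ℤ), -1; 1, 0])⁻¹ * M σ * !![(0 : ℤ), -1; 1, 0]) ∧
    ((M σ)ᵀ = !![(0 : ℤ), 1; 1, 0] * M σ * (!![(0 : ℤ), 1; 1, 0])ᵀ ∨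
      (M σ)ᵀ = (1 : Matrix (Fin 2) (Fin 2) ℤ) * M σ * (1 : Matrix (Fin 2) (Fin 2) ℤ)ᵀ) :=
  selfdual_matrix_conditions_general σ ρ hdet φ hrecip hsd
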